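/- arXiv:1411.2544 — 5 statements merged into one kernel-verified Lean document; each statement's English description precedes it below -/
import Mathlib

section
/- The Randić energy of the star graph S_n = K_{1,n-1} on n ≥ 2 vertices equals 2. -/
/-!
The Randić matrix of the star with centre `0` and `n` leaves is `u vᵀ + v uᵀ`, where `u` is the
indicator of the centre and `v` is `1/√n` on every leaf. Since `u` and `v` are orthonormal,
`R² = u uᵀ + v vᵀ` is the projection onto their span and `R³ = R`. Hence every eigenvalue of `R`
lies in `{-1, 0, 1}`, so `|λ| = λ²`, and the energy is `tr R² = ‖u‖² + ‖v‖² = 2`.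
-/

open scoped Classical
open Polynomial

/-- The Randić matrix of a simple graph: entry `1/√(dᵢ dⱼ)` for adjacent
vertices `vᵢ ∼ vⱼ` and `0` otherwise. -/
noncomputable def randicMatrix {V : Type*} [Fintype V] (G : SimpleGraph V) : Matrix V V ℝ :=
  fun i j => if G.Adj i j then 1 / Real.sqrt ((G.degree i : ℝ) * (G.degree j : ℝ)) else 0

/-- The Randić energy: the sum of the absolute values of the eigenvalues
of the Randić matrix. -/
noncomputable def randicEnergy {V : Type*} [Fintype V] [DecidableEq V] (G : SimpleGraph V) : ℝ :=
  if h : (randicMatrix G).IsHermitian then ∑ i, |h.eigenvalues i| else 0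

/-- The star graph `S n` on `Fin n`, with center `0` adjacent to the `n - 1` leaves. -/
def starGraph (n : ℕ) : SimpleGraph (Fin n) where
  Adj i j := i ≠ j ∧ (i.val = 0 ∨ j.val = 0)
  symm := ⟨fun i j h => ⟨h.1.symm, h.2.symm⟩⟩
  loopless := ⟨fun i h => h.1 rfl⟩

lemma abs_eq_sq_of_pow_three_eq_self {x : ℝ} (h : x ^ 3 = x) : |x| = x ^ 2 := by
  have hx : x = 0 ∨ x = 1 ∨ x = -1 := by
    have : x * ((x - 1) * (x + 1)) = 0 := by linear_combination h
    simpa [sub_eq_zero, add_eq_zero_iff_eq_neg] using this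
  rcases hx with rfl | rfl | rfl <;> norm_num

namespace Matrix

section Spectral

variable {n : Type*} [Fintype n] [DecidableEq n] {A : Matrix n n ℝ}

lemma IsHermitian.trace_sq (hA : A.IsHermitian) : (A ^ 2).trace = ∑ i, hA.eigenvalues i ^ 2 := by
  conv_lhs => rw [sq, hA.spectral_theorem, ← map_mul, Unitary.conjStarAlgAut_apply,
    trace_mul_cycle, Unitary.coe_star_mul_self, one_mul, diagonal_mul_diagonal, trace_diagonal]
  simp [sq]

lemma IsHermitian.eigenvalues_pow_three (hA : A.IsHermitian) (h3 : A ^ 3 = A) (i : n) :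
    hA.eigenvalues i ^ 3 = hA.eigenvalues i := by
  set v : n → ℝ := ⇑(hA.eigenvectorBasis i)
  have hv : A *ᵥ v = hA.eigenvalues i • v := hA.mulVec_eigenvectorBasis i
  have hv0 : v ≠ 0 := (WithLp.ofLp_eq_zero 2).ne.2 <| hA.eigenvectorBasis.orthonormal.ne_zero i
  refine smul_left_injective ℝ hv0 ?_
  calc hA.eigenvalues i ^ 3 • v = (A ^ 3) *ᵥ v := by
        simp only [pow_succ, pow_zero, one_mul, ← mulVec_mulVec, hv, mulVec_smul, smul_smul,
          mul_assoc]
    _ = hA.eigenvalues i • v := by rw [h3, hv]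

lemma IsHermitian.sum_abs_eigenvalues_of_pow_three (hA : A.IsHermitian) (h3 : A ^ 3 = A) :
    ∑ i, |hA.eigenvalues i| = (A ^ 2).trace := by
  rw [hA.trace_sq]
  exact Finset.sum_congr rfl fun i _ =>
    abs_eq_sq_of_pow_three_eq_self (hA.eigenvalues_pow_three h3 i)

end Spectral

section RankTwo

variable {n R : Type*} [Fintype n] [DecidableEq n] [CommRing R] {u v : n → R}

lemma vecMulVec_add_vecMulVec_sq (huu : u ⬝ᵥ u = 1) (hvv : v ⬝ᵥ v = 1) (huv : u ⬝ᵥ v = 0) :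
    (vecMulVec u v + vecMulVec v u) ^ 2 = vecMulVec u u + vecMulVec v v := by
  rw [sq, add_mul, mul_add, mul_add]
  simp only [vecMulVec_mul_vecMulVec, dotProduct_comm v u, huu, hvv, huv, zero_smul, one_smul,
    vecMulVec_zero, zero_add, add_zero]

lemma vecMulVec_add_vecMulVec_pow_three (huu : u ⬝ᵥ u = 1) (hvv : v ⬝ᵥ v = 1)
    (huv : u ⬝ᵥ v = 0) :
    (vecMulVec u v + vecMulVec v u) ^ 3 = vecMulVec u v + vecMulVec v u := by
  rw [pow_succ, vecMulVec_add_vecMulVec_sq huu hvv huv, add_mul, mul_add, mul_add]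
  simp only [vecMulVec_mul_vecMulVec, dotProduct_comm v u, huu, hvv, huv, zero_smul, one_smul,
    vecMulVec_zero, zero_add, add_zero]

lemma trace_vecMulVec_add_vecMulVec_sq (huu : u ⬝ᵥ u = 1) (hvv : v ⬝ᵥ v = 1)
    (huv : u ⬝ᵥ v = 0) :
    ((vecMulVec u v + vecMulVec v u) ^ 2).trace = 2 := by
  rw [vecMulVec_add_vecMulVec_sq huu hvv huv, trace_add, trace_vecMulVec, trace_vecMulVec, huu,
    hvv, one_add_one_eq_two]

end RankTwo

end Matrix

lemma randicMatrix_isHermitian {V : Type*} [Fintype V] (G : SimpleGraph V) :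
    (randicMatrix G).IsHermitian := by
  ext i j
  simp only [Matrix.conjTranspose_apply, randicMatrix, star_trivial, G.adj_comm, mul_comm]

section StarGraph

variable {n : ℕ}

lemma starGraph_adj {i j : Fin (n + 1)} :
    (starGraph (n + 1)).Adj i j ↔ i ≠ j ∧ (i = 0 ∨ j = 0) := by
  simp only [starGraph, Fin.ext_iff, Fin.val_zero]

lemma starGraph_degree_zero : (starGraph (n + 1)).degree 0 = n := by
  rw [← SimpleGraph.card_neighborFinset_eq_degree]
  have : (starGraph (n + 1)).neighborFinset 0 = {0}ᶜ := by
    ext j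
    simp [starGraph_adj, eq_comm]
  simp [this, Finset.card_compl]

lemma starGraph_degree_of_ne_zero {i : Fin (n + 1)} (hi : i ≠ 0) :
    (starGraph (n + 1)).degree i = 1 := by
  rw [← SimpleGraph.card_neighborFinset_eq_degree]
  have : (starGraph (n + 1)).neighborFinset i = {0} := by
    ext j
    simp only [SimpleGraph.mem_neighborFinset, starGraph_adj, hi, false_or, Finset.mem_singleton]
    exact ⟨And.right, fun hj => ⟨hj ▸ hi, hj⟩⟩
  simp [this]

noncomputable def starLeafVector (n : ℕ) : Fin (n + 1) → ℝ :=
  fun i => if i = 0 then 0 else (√n)⁻¹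

lemma randicMatrix_starGraph :
    randicMatrix (starGraph (n + 1)) =
      Matrix.vecMulVec (Pi.single 0 1) (starLeafVector n) +
        Matrix.vecMulVec (starLeafVector n) (Pi.single 0 1) := by
  ext i j
  rcases eq_or_ne i 0 with rfl | hi <;> rcases eq_or_ne j 0 with rfl | hj <;>
    simp [randicMatrix, Matrix.vecMulVec_apply, starLeafVector, starGraph_adj,
      starGraph_degree_zero, starGraph_degree_of_ne_zero, eq_comm (a := (0 : Fin (n + 1))), *]

lemma starLeafVector_dotProduct_self (hn : n ≠ 0) :
    starLeafVector n ⬝ᵥ starLeafVector n = 1 := by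
  have hn' : (0 : ℝ) < n := by positivity
  simp [dotProduct, Fin.sum_univ_succ, starLeafVector, Fin.succ_ne_zero, ← sq, hn'.le, hn'.ne']

lemma single_zero_dotProduct_starLeafVector :
    Pi.single 0 1 ⬝ᵥ starLeafVector n = 0 := by
  simp [single_dotProduct, starLeafVector]

end StarGraph

theorem stmt1 (n : ℕ) (hn : 2 ≤ n) : randicEnergy (starGraph n) = 2 := by
  obtain ⟨k, rfl⟩ : ∃ k, n = k + 1 := ⟨n - 1, by omega⟩
  have huu : Pi.single 0 1 ⬝ᵥ Pi.single (0 : Fin (k + 1)) (1 : ℝ) = 1 := by simp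
  have hvv : starLeafVector k ⬝ᵥ starLeafVector k = 1 := starLeafVector_dotProduct_self (by omega)
  have huv := single_zero_dotProduct_starLeafVector (n := k)
  have hA := randicMatrix_isHermitian (starGraph (k + 1))
  have h3 : randicMatrix (starGraph (k + 1)) ^ 3 = randicMatrix (starGraph (k + 1)) := by
    rw [randicMatrix_starGraph]
    exact Matrix.vecMulVec_add_vecMulVec_pow_three huu hvv huv
  rw [randicEnergy, dif_pos hA, hA.sum_abs_eigenvalues_of_pow_three h3, randicMatrix_starGraph]
  exact Matrix.trace_vecMulVec_add_vecMulVec_sq huu hvv huv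
end

section
/- For n ≥ 2, the Randić characteristic polynomial of the friendship graph F_n is (λ² − 1/4)^{n−1}(λ − 1)(λ + 1/2)². -/
open scoped Classical
open Polynomial

/-- The friendship graph `F n`: `n` triangles sharing the common vertex `none`. -/
def friendshipGraph (n : ℕ) : SimpleGraph (Option (Fin n × Fin 2)) where
  Adj x y := (x = none ∧ y ≠ none) ∨ (y = none ∧ x ≠ none) ∨
    (∃ i a b, a ≠ b ∧ x = some (i, a) ∧ y = some (i, b))
  symm := by
    constructor
    rintro x y (⟨h1, h2⟩ | ⟨h1, h2⟩ | ⟨i, a, b, hab, hx, hy⟩)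
    · exact Or.inr (Or.inl ⟨h1, h2⟩)
    · exact Or.inl ⟨h1, h2⟩
    · exact Or.inr (Or.inr ⟨i, b, a, hab.symm, hy, hx⟩)
  loopless := by
    constructor
    rintro x (⟨h1, h2⟩ | ⟨h1, h2⟩ | ⟨i, a, b, hab, hx, hy⟩)
    · exact h2 h1
    · exact h2 h1
    · rw [hx] at hy; simp at hy; exact hab hy

/-!
The friendship graph is the cone over `n` disjoint edges. Putting the centre last, its Randić
matrix is the block matrix `[[I ⊗ J, c], [c, 0]]` with `J = [[0, 1/2], [1/2, 0]]` and constant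
border `c = 1/√(4n)`. Since every row of `I ⊗ J` sums to `1/2`, a column operation shows that
the characteristic polynomial `χ` of `F_n` satisfies
`χ · (X - 1/2) = χ(I ⊗ J) · (X (X - 1/2) - 2n c²)`, where `χ(I ⊗ J) = (X² - 1/4)ⁿ` and
`2n c² = 1/2`; cancelling `X - 1/2` gives the formula.
-/

open Matrix
open scoped Kronecker

namespace Matrix

variable {R : Type*} [CommRing R] {m : Type*} [Fintype m] [DecidableEq m]

theorem charmatrix_one_kronecker {ι : Type*} [Fintype ι] [DecidableEq ι] (B : Matrix m m R) :
    charmatrix ((1 : Matrix ι ι R) ⊗ₖ B) = (1 : Matrix ι ι R[X]) ⊗ₖ charmatrix B := by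
  ext ⟨i, a⟩ ⟨j, b⟩ : 1
  by_cases hij : i = j <;> by_cases hab : a = b <;> simp [hij, hab]

theorem charpoly_one_kronecker {ι : Type*} [Fintype ι] [DecidableEq ι] (B : Matrix m m R) :
    ((1 : Matrix ι ι R) ⊗ₖ B).charpoly = B.charpoly ^ Fintype.card ι := by
  rw [charpoly, charmatrix_one_kronecker, det_kronecker, det_one, one_pow, one_mul, charpoly]

theorem sum_charmatrix_apply {A : Matrix m m R} {r : R} (hA : ∀ i, ∑ j, A i j = r) (i : m) :
    ∑ j, charmatrix A i j = X - C r := by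
  simp [charmatrix_apply, Finset.sum_sub_distrib, diagonal_apply, ← map_sum, hA]

theorem charpoly_fromBlocks_const_mul_X_sub_C {A : Matrix m m R} {r : R}
    (hA : ∀ i, ∑ j, A i j = r) (c d : R) :
    (fromBlocks A (of fun _ _ => c) (of fun _ _ => c) (of fun _ _ => d) :
        Matrix (m ⊕ Unit) (m ⊕ Unit) R).charpoly * (X - C r) =
      A.charpoly * ((X - C d) * (X - C r) - C (Fintype.card m * c ^ 2)) := by
  -- `E` scales the last column by `X - r` and adds `c` times every other column to it; this
  -- clears the upper right block because the rows of `charmatrix A` all sum to `X - r`.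
  set E : Matrix (m ⊕ Unit) (m ⊕ Unit) R[X] :=
    fromBlocks 1 (of fun _ _ => C c) 0 (of fun _ _ => X - C r)
  have hE : E.det = X - C r := by simp [E, det_fromBlocks_zero₂₁]
  have hprod : charmatrix (fromBlocks A (of fun _ _ => c) (of fun _ _ => c) (of fun _ _ => d)) * E
      = fromBlocks (charmatrix A) 0 (of fun _ _ => -C c)
          (of fun _ _ => (X - C d) * (X - C r) - C (Fintype.card m * c ^ 2)) := by
    rw [charmatrix_fromBlocks, fromBlocks_multiply]
    congr 1 <;> ext i j : 1
    · simp
    · simp [mul_apply, ← Finset.sum_mul, sum_charmatrix_apply hA]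
      ring
    · simp
    · simp [mul_apply]
      ring
  simpa [charpoly, det_mul, hE, det_fromBlocks_zero₁₂] using congrArg det hprod

end Matrix

namespace friendshipGraph

theorem adj_none_some {n : ℕ} (p : Fin n × Fin 2) : (friendshipGraph n).Adj none (some p) :=
  Or.inl ⟨rfl, Option.some_ne_none p⟩

theorem adj_some_some {n : ℕ} {i j : Fin n} {a b : Fin 2} :
    (friendshipGraph n).Adj (some (i, a)) (some (j, b)) ↔ i = j ∧ a ≠ b := by
  constructor
  · rintro (⟨h, -⟩ | ⟨h, -⟩ | ⟨k, a', b', hab, hx, hy⟩)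
    · simp at h
    · simp at h
    · simp only [Option.some.injEq, Prod.mk.injEq] at hx hy
      exact ⟨hx.1.trans hy.1.symm, hx.2 ▸ hy.2 ▸ hab⟩
  · rintro ⟨rfl, hab⟩
    exact Or.inr (Or.inr ⟨i, a, b, hab, rfl, rfl⟩)

theorem degree_none (n : ℕ) : (friendshipGraph n).degree none = 2 * n := by
  have : (friendshipGraph n).neighborFinset none = {none}ᶜ := by
    ext (_ | p) <;> simp [adj_none_some]
  simp [← SimpleGraph.card_neighborFinset_eq_degree, this, Finset.card_compl]
  ring

theorem degree_some {n : ℕ} (p : Fin n × Fin 2) : (friendshipGraph n).degree (some p) = 2 := by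
  obtain ⟨i, a⟩ := p
  have : (friendshipGraph n).neighborFinset (some (i, a)) = {none, some (i, a + 1)} := by
    ext (_ | ⟨j, b⟩)
    · simp [(adj_none_some _).symm]
    · simp only [SimpleGraph.mem_neighborFinset, adj_some_some, Finset.mem_insert,
        Finset.mem_singleton, reduceCtorEq, Option.some.injEq, Prod.mk.injEq, false_or]
      fin_cases a <;> fin_cases b <;> simp [eq_comm]
  rw [← SimpleGraph.card_neighborFinset_eq_degree, this, Finset.card_pair (by simp)]

end friendshipGraph

section randicMatrix

variable {V : Type*} [Fintype V] {G : SimpleGraph V} {u v : V}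

theorem randicMatrix_apply_of_adj (h : G.Adj u v) :
    randicMatrix G u v = 1 / √(G.degree u * G.degree v) := if_pos h

theorem randicMatrix_apply_of_not_adj (h : ¬G.Adj u v) : randicMatrix G u v = 0 := if_neg h

end randicMatrix

open friendshipGraph in
theorem randicMatrix_friendshipGraph_reindex (n : ℕ) :
    reindex (Equiv.optionEquivSumPUnit _) (Equiv.optionEquivSumPUnit _)
        (randicMatrix (friendshipGraph n)) =
      fromBlocks ((1 : Matrix (Fin n) (Fin n) ℝ) ⊗ₖ !![0, 1 / 2; 1 / 2, 0])
        (of fun _ _ => 1 / √(4 * n)) (of fun _ _ => 1 / √(4 * n)) (of fun _ _ => 0) := by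
  ext (⟨i, a⟩ | _) (⟨j, b⟩ | _) <;>
    simp only [reindex_apply, submatrix_apply, Equiv.optionEquivSumPUnit_symm_inl,
      Equiv.optionEquivSumPUnit_symm_inr, fromBlocks_apply₁₁, fromBlocks_apply₁₂,
      fromBlocks_apply₂₁, fromBlocks_apply₂₂, of_apply, kroneckerMap_apply]
  · by_cases h : (friendshipGraph n).Adj (some (i, a)) (some (j, b))
    · obtain ⟨rfl, hab⟩ := adj_some_some.1 h
      rw [randicMatrix_apply_of_adj h, degree_some, degree_some]
      fin_cases a <;> fin_cases b <;> first | exact absurd rfl hab | norm_num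
    · rw [randicMatrix_apply_of_not_adj h]
      rw [adj_some_some] at h
      by_cases hij : i = j
      · obtain rfl : a = b := by tauto
        subst hij
        fin_cases a <;> simp
      · simp [hij]
  · rw [randicMatrix_apply_of_adj (adj_none_some _).symm, degree_none, degree_some]
    congr 2
    push_cast
    ring
  · rw [randicMatrix_apply_of_adj (adj_none_some _), degree_none, degree_some]
    congr 2
    push_cast
    ring
  · exact randicMatrix_apply_of_not_adj (SimpleGraph.irrefl _)

theorem stmt6 (n : ℕ) (hn : 2 ≤ n) :
    (randicMatrix (friendshipGraph n)).charpoly =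
      (X ^ 2 - C (1 / 4)) ^ (n - 1) * (X - 1) * (X + C (1 / 2)) ^ 2 := by
  obtain ⟨k, rfl⟩ : ∃ k, n = k + 1 := ⟨n - 1, by omega⟩
  have hJ : (!![0, 1 / 2; 1 / 2, 0] : Matrix (Fin 2) (Fin 2) ℝ).charpoly = X ^ 2 - C (1 / 4) := by
    rw [charpoly_fin_two]
    norm_num [trace_fin_two, det_fin_two, ← sub_eq_add_neg]
  have hrow : ∀ p, ∑ q,
      ((1 : Matrix (Fin (k + 1)) (Fin (k + 1)) ℝ) ⊗ₖ !![0, 1 / 2; 1 / 2, 0]) p q = 1 / 2 := by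
    rintro ⟨i, a⟩
    fin_cases a <;> simp [Fintype.sum_prod_type, one_apply, Fin.sum_univ_two]
  have hc :
      (Fintype.card (Fin (k + 1) × Fin 2) : ℝ) * (1 / √(4 * (k + 1 : ℕ))) ^ 2 = 1 / 2 := by
    rw [div_pow, Real.sq_sqrt (by positivity), Fintype.card_prod, Fintype.card_fin,
      Fintype.card_fin]
    field_simp
    push_cast
    ring
  have hcone := charpoly_fromBlocks_const_mul_X_sub_C hrow (1 / √(4 * (k + 1 : ℕ))) 0
  rw [← randicMatrix_friendshipGraph_reindex, charpoly_reindex, charpoly_one_kronecker, hJ, hc,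
    Fintype.card_fin] at hcone
  refine mul_right_cancel₀ (X_sub_C_ne_zero (1 / 2 : ℝ)) (hcone.trans ?_)
  have h4 : C (1 / 4 : ℝ) = C (1 / 2) ^ 2 := by rw [← C_pow]; norm_num
  have h1 : C (1 / 2 : ℝ) * 2 = 1 := by rw [← C_ofNat, ← C_mul]; norm_num
  rw [h4, map_zero, sub_zero, add_tsub_cancel_right]
  linear_combination -(X ^ 2 - C (1 / 2 : ℝ) ^ 2) ^ k * (X ^ 2 - C (1 / 2) ^ 2) * X * h1
end

section
/- For n ≥ 2, the Randić characteristic polynomial of the Dutch windmill graph D_4^n is λ^{n+1}(λ² − 1/2)^{n−1}(λ² − 1). -/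
open scoped Classical
open Polynomial

/-- The Dutch windmill graph `D₄ⁿ`: `n` squares sharing the common vertex `none`.
For each `i`, the 4-cycle is `none, (i,0), (i,2), (i,1)`. -/
def dutchWindmillGraph (n : ℕ) : SimpleGraph (Option (Fin n × Fin 3)) where
  Adj x y :=
    (∃ i a, a ≠ 2 ∧ ((x = none ∧ y = some (i, a)) ∨ (y = none ∧ x = some (i, a)))) ∨
    (∃ i a, a ≠ 2 ∧ ((x = some (i, a) ∧ y = some (i, 2)) ∨ (y = some (i, a) ∧ x = some (i, 2))))
  symm := by
    constructor
    rintro x y (⟨i, a, ha, h | h⟩ | ⟨i, a, ha, h | h⟩)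
    · exact Or.inl ⟨i, a, ha, Or.inr h⟩
    · exact Or.inl ⟨i, a, ha, Or.inl h⟩
    · exact Or.inr ⟨i, a, ha, Or.inr h⟩
    · exact Or.inr ⟨i, a, ha, Or.inl h⟩
  loopless := by
    constructor
    rintro x (⟨i, a, ha, ⟨h1, h2⟩ | ⟨h1, h2⟩⟩ | ⟨i, a, ha, ⟨h1, h2⟩ | ⟨h1, h2⟩⟩) <;>
      first
        | (rw [h1] at h2; simp at h2; done)
        | (rw [h1] at h2; injection h2 with h; exact ha (Prod.mk.injEq .. ▸ h).2)

open scoped Kronecker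

/-!
Split off the centre. Away from it, `λI − R` is block diagonal with `n` copies of `λI − B`,
where `B` is the Randić matrix of one blade: `det (λI − B) = λ(λ² − 1/2)`, and
`(λI − B)(λ, λ, 1) = (λ² − 1/2)(1, 1, 0)` solves the block system against the centre's column.
The Schur complement of the centre is then `λ(λ² − 1)/(λ² − 1/2)`, so
`det (λI − R) = (λ(λ² − 1/2))ⁿ · λ(λ² − 1)/(λ² − 1/2)` whenever `λ² ≠ 1/2`, and polynomials
agreeing at infinitely many points are equal.
-/

namespace Matrix

variable {ι m n R : Type*} [Fintype m] [Fintype n] [DecidableEq n] [CommRing R]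

theorem det_fromBlocks_of_mul_eq [DecidableEq m] (A : Matrix m m R) (B : Matrix m n R)
    (C : Matrix n m R) (D : Matrix n n R) (X : Matrix m n R) (hX : A * X = B) :
    (fromBlocks A B C D).det = A.det * (D - C * X).det := by
  have hP : (fromBlocks (1 : Matrix m m R) (-X) 0 1).det = 1 := by
    rw [det_fromBlocks_zero₂₁, det_one, det_one, one_mul]
  calc (fromBlocks A B C D).det
      = (fromBlocks A B C D * fromBlocks 1 (-X) 0 1).det := by rw [det_mul, hP, mul_one]
    _ = (fromBlocks A 0 C (D - C * X)).det := by
        simp [fromBlocks_multiply, hX, sub_eq_neg_add]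
    _ = A.det * (D - C * X).det := det_fromBlocks_zero₁₂ _ _ _

theorem det_option_of_mulVec_eq [Fintype ι] [DecidableEq ι] (M : Matrix (Option ι) (Option ι) R)
    (x : ι → R) (hx : M.submatrix some some *ᵥ x = fun i => M (some i) none) :
    M.det = (M.submatrix some some).det * (M none none - ∑ i, M none (some i) * x i) := by
  set e := (Equiv.optionEquivSumPUnit.{0} ι).symm
  rw [← det_submatrix_equiv_self e M, ← fromBlocks_toBlocks (M.submatrix e e),
    det_fromBlocks_of_mul_eq _ _ _ _ (replicateCol Unit x), det_unique (n := PUnit)]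
  · rfl
  · ext i u
    exact congrFun hx i

theorem one_kronecker_mulVec (B : Matrix m m R) (y : m → R) :
    ((1 : Matrix n n R) ⊗ₖ B) *ᵥ (fun p => y p.2) = fun p => (B *ᵥ y) p.2 := by
  ext ⟨i, a⟩
  simp [mulVec, dotProduct, Fintype.sum_prod_type, one_apply, ite_mul]

end Matrix

lemma randicMatrix_isSymm {V : Type*} [Fintype V] (G : SimpleGraph V) :
    (randicMatrix G).IsSymm :=
  Matrix.IsSymm.ext fun u v => by simp only [randicMatrix, G.adj_comm, mul_comm]

section DutchWindmill

open Matrix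

variable {n : ℕ}

@[simp]
lemma dutchWindmillGraph_adj_none_some (i : Fin n) (a : Fin 3) :
    (dutchWindmillGraph n).Adj none (some (i, a)) ↔ a ≠ 2 := by
  simp [dutchWindmillGraph]

@[simp]
lemma dutchWindmillGraph_adj_some_none (i : Fin n) (a : Fin 3) :
    (dutchWindmillGraph n).Adj (some (i, a)) none ↔ a ≠ 2 := by
  simp [dutchWindmillGraph]

@[simp]
lemma dutchWindmillGraph_adj_some_some (i j : Fin n) (a b : Fin 3) :
    (dutchWindmillGraph n).Adj (some (i, a)) (some (j, b)) ↔ i = j ∧ (a = 2 ↔ b ≠ 2) := by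
  simp only [dutchWindmillGraph, Option.some.injEq, Prod.mk.injEq, reduceCtorEq, false_and,
    and_false, false_or, or_false, exists_false]
  constructor
  · rintro ⟨k, c, hc, ⟨⟨rfl, rfl⟩, rfl, rfl⟩ | ⟨⟨rfl, rfl⟩, rfl, rfl⟩⟩ <;> simp_all
  · rintro ⟨rfl, h⟩
    by_cases ha : a = 2
    · exact ⟨i, b, h.1 ha, Or.inr ⟨⟨rfl, rfl⟩, rfl, ha⟩⟩
    · exact ⟨i, a, ha, Or.inl ⟨⟨rfl, rfl⟩, rfl, by tauto⟩⟩

lemma dutchWindmillGraph_degree_none : (dutchWindmillGraph n).degree none = 2 * n := by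
  rw [← SimpleGraph.card_neighborFinset_eq_degree, SimpleGraph.neighborFinset_eq_filter,
    Finset.card_filter, Fintype.sum_option, Fintype.sum_prod_type]
  simp [Fin.sum_univ_three, mul_comm]

lemma dutchWindmillGraph_degree_some (i : Fin n) (a : Fin 3) :
    (dutchWindmillGraph n).degree (some (i, a)) = 2 := by
  rw [← SimpleGraph.card_neighborFinset_eq_degree, SimpleGraph.neighborFinset_eq_filter,
    Finset.card_filter, Fintype.sum_option, Fintype.sum_prod_type]
  simp only [dutchWindmillGraph_adj_some_none, dutchWindmillGraph_adj_some_some, ite_and]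
  rw [Fintype.sum_eq_single i (fun j hj => by simp [Ne.symm hj])]
  fin_cases a <;> simp [Fin.sum_univ_three]

/-- The Randić matrix restricted to one blade `(i,0) — (i,2) — (i,1)`, whose vertices all have
degree 2. -/
noncomputable def windmillBlade : Matrix (Fin 3) (Fin 3) ℝ :=
  !![0, 0, 1 / 2; 0, 0, 1 / 2; 1 / 2, 1 / 2, 0]

lemma randicMatrix_dutchWindmillGraph_none_none :
    randicMatrix (dutchWindmillGraph n) none none = 0 := by
  simp [randicMatrix]

lemma randicMatrix_dutchWindmillGraph_none_some (p : Fin n × Fin 3) :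
    randicMatrix (dutchWindmillGraph n) none (some p) = if p.2 = 2 then 0 else 1 / √(4 * n) := by
  obtain ⟨i, a⟩ := p
  by_cases ha : a = 2
  · simp [randicMatrix, ha]
  · simp only [randicMatrix, if_pos ((dutchWindmillGraph_adj_none_some i a).2 ha), if_neg ha,
      dutchWindmillGraph_degree_none, dutchWindmillGraph_degree_some]
    push_cast
    ring_nf

lemma randicMatrix_dutchWindmillGraph_some_none (p : Fin n × Fin 3) :
    randicMatrix (dutchWindmillGraph n) (some p) none = if p.2 = 2 then 0 else 1 / √(4 * n) := by
  rw [(randicMatrix_isSymm _).apply, randicMatrix_dutchWindmillGraph_none_some]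

lemma randicMatrix_dutchWindmillGraph_submatrix_some :
    (randicMatrix (dutchWindmillGraph n)).submatrix some some = 1 ⊗ₖ windmillBlade := by
  ext ⟨i, a⟩ ⟨j, b⟩
  by_cases hij : i = j
  · subst hij
    fin_cases a <;> fin_cases b <;>
      simp [randicMatrix, windmillBlade, dutchWindmillGraph_degree_some]
  · simp [randicMatrix, hij]

lemma scalar_sub_windmillBlade (t : ℝ) :
    scalar (Fin 3) t - windmillBlade = !![t, 0, -1 / 2; 0, t, -1 / 2; -1 / 2, -1 / 2, t] := by
  ext a b
  fin_cases a <;> fin_cases b <;> simp [windmillBlade] <;> ring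

lemma det_scalar_sub_windmillBlade (t : ℝ) :
    (scalar (Fin 3) t - windmillBlade).det = t * (t ^ 2 - 1 / 2) := by
  rw [scalar_sub_windmillBlade, det_fin_three]
  simp only [of_apply, cons_val', cons_val_zero, cons_val_fin_one, cons_val_one, cons_val]
  ring

lemma scalar_sub_windmillBlade_mulVec (t : ℝ) :
    (scalar (Fin 3) t - windmillBlade) *ᵥ ![t, t, 1] = (t ^ 2 - 1 / 2) • ![1, 1, 0] := by
  rw [scalar_sub_windmillBlade]
  ext a
  fin_cases a <;> simp [mulVec, dotProduct, Fin.sum_univ_three] <;> ring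

lemma scalar_sub_randicMatrix_dutchWindmillGraph_submatrix_some (t : ℝ) :
    (scalar _ t - randicMatrix (dutchWindmillGraph n)).submatrix some some =
      1 ⊗ₖ (scalar (Fin 3) t - windmillBlade) := by
  rw [submatrix_sub, Pi.sub_apply, Pi.sub_apply, randicMatrix_dutchWindmillGraph_submatrix_some]
  ext ⟨i, a⟩ ⟨j, b⟩
  by_cases hij : i = j <;> by_cases hab : a = b <;> simp [hij, hab, one_apply]

noncomputable def windmillBladeSolution (n : ℕ) (t : ℝ) : Fin 3 → ℝ :=
  (-(1 / √(4 * n) / (t ^ 2 - 1 / 2))) • ![t, t, 1]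

lemma scalar_sub_randicMatrix_dutchWindmillGraph_mulVec_windmillBladeSolution {t : ℝ}
    (ht : t ^ 2 ≠ 1 / 2) :
    (scalar _ t - randicMatrix (dutchWindmillGraph n)).submatrix some some *ᵥ
        (fun p => windmillBladeSolution n t p.2) =
      fun p => (scalar _ t - randicMatrix (dutchWindmillGraph n) : Matrix _ _ ℝ) (some p) none := by
  rw [scalar_sub_randicMatrix_dutchWindmillGraph_submatrix_some, windmillBladeSolution,
    one_kronecker_mulVec, mulVec_smul, scalar_sub_windmillBlade_mulVec, smul_smul, neg_mul,
    div_mul_cancel₀ _ (sub_ne_zero.2 ht)]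
  ext ⟨i, a⟩
  fin_cases a <;> simp [randicMatrix_dutchWindmillGraph_some_none]

lemma scalar_sub_randicMatrix_dutchWindmillGraph_schurComplement (hn : 0 < n) {t : ℝ}
    (ht : t ^ 2 ≠ 1 / 2) :
    (scalar _ t - randicMatrix (dutchWindmillGraph n) : Matrix _ _ ℝ) none none -
        ∑ p, (scalar _ t - randicMatrix (dutchWindmillGraph n) : Matrix _ _ ℝ) none (some p) *
          windmillBladeSolution n t p.2 =
      t * (t ^ 2 - 1) / (t ^ 2 - 1 / 2) := by
  have hs : t ^ 2 - 1 / 2 ≠ 0 := sub_ne_zero.2 ht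
  have hw : (n : ℝ) * (1 / √(4 * n)) ^ 2 = 1 / 4 := by
    rw [div_pow, Real.sq_sqrt (by positivity)]
    field_simp
  simp only [Matrix.sub_apply, scalar_apply, diagonal_apply_eq,
    diagonal_apply_ne _ (Option.some_ne_none _).symm, randicMatrix_dutchWindmillGraph_none_none,
    randicMatrix_dutchWindmillGraph_none_some, windmillBladeSolution]
  generalize 1 / √(4 * n) = w at hw ⊢
  generalize hs_def : t ^ 2 - 1 / 2 = s at hs ⊢
  simp only [sub_zero, zero_sub, Pi.smul_apply, smul_eq_mul, neg_mul, mul_neg, ite_mul, zero_mul,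
    neg_neg, Fintype.sum_prod_type, Fin.sum_univ_three, Fin.reduceEq, ↓reduceIte, cons_val_zero,
    cons_val_one, add_zero, Finset.sum_const, Finset.card_univ, Fintype.card_fin, smul_add,
    nsmul_eq_mul]
  field_simp
  linear_combination (-2 * t) * hw - t * hs_def

lemma eval_charpoly_randicMatrix_dutchWindmillGraph (hn : 0 < n) {t : ℝ} (ht : t ^ 2 ≠ 1 / 2) :
    (randicMatrix (dutchWindmillGraph n)).charpoly.eval t =
      t ^ (n + 1) * (t ^ 2 - 1 / 2) ^ (n - 1) * (t ^ 2 - 1) := by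
  rw [eval_charpoly, det_option_of_mulVec_eq _ _
      (scalar_sub_randicMatrix_dutchWindmillGraph_mulVec_windmillBladeSolution ht),
    scalar_sub_randicMatrix_dutchWindmillGraph_schurComplement hn ht,
    scalar_sub_randicMatrix_dutchWindmillGraph_submatrix_some, det_kronecker,
    det_scalar_sub_windmillBlade, det_one, one_pow, one_mul, Fintype.card_fin]
  obtain ⟨m, rfl⟩ := Nat.exists_eq_add_one.2 hn
  have hs : t ^ 2 - 1 / 2 ≠ 0 := sub_ne_zero.2 ht
  generalize t ^ 2 - 1 / 2 = s at hs ⊢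
  rw [Nat.add_sub_cancel]
  field_simp
  ring

end DutchWindmill

theorem stmt9 (n : ℕ) (hn : 2 ≤ n) :
    (randicMatrix (dutchWindmillGraph n)).charpoly =
      X ^ (n + 1) * (X ^ 2 - C (1 / 2)) ^ (n - 1) * (X ^ 2 - 1) := by
  refine eq_of_infinite_eval_eq _ _ ((Set.Ioi_infinite 1).mono fun t (ht : 1 < t) => ?_)
  have ht2 : t ^ 2 ≠ 1 / 2 := (show (1 : ℝ) / 2 < t ^ 2 by nlinarith).ne'
  simp [eval_charpoly_randicMatrix_dutchWindmillGraph (by omega : 0 < n) ht2]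
end

section
/- Define Λ_1 = λ, Λ_2 = λ² − 1/4, and Λ_k = λΛ_{k−1} − (1/4)Λ_{k−2} for k ≥ 3. Then for n ≥ 5, the Randić characteristic polynomial of the path P_n equals (λ² − 1)(λΛ_{n−3} − (1/4)Λ_{n−4}). -/
open scoped Classical
open Polynomial

/-- `Λ k`: the determinant of the `k × k` tridiagonal matrix with `λ` on the
diagonal and `-1/2` off the diagonal, given by `Λ 1 = X`, `Λ 2 = X ^ 2 - 1/4`
and the recurrence `Λ k = X * Λ (k - 1) - (1/4) * Λ (k - 2)`. -/
noncomputable def Lam : ℕ → Polynomial ℝ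
  | 0 => 1
  | 1 => Polynomial.X
  | (k + 2) => Polynomial.X * Lam (k + 1) - Polynomial.C (1 / 4) * Lam k

/-!
`λI - R(Pₙ)` is tridiagonal, with `λ` on the diagonal and `-1/√(dₚ dₚ₊₁)` next to it: `-1/√2`
at the two end edges and `-1/2` elsewhere. Expanding along the first row, the trailing principal
minors `Dₖ` (`pathTail n k`) satisfy `Dₖ₊₂ = λ Dₖ₊₁ - cₖ Dₖ`, where `cₖ` is `1/2` when the top
edge of the minor is an end edge and `1/4` otherwise. Hence `Dₖ₊₂ = λ Λₖ₊₁ - ½ Λₖ` for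
`k + 2 < n`, and one last expansion at the first vertex gives
`det (λI - R(Pₙ)) = λ Dₙ₋₁ - ½ Dₙ₋₂ = (λ² - 1) Λₙ₋₂ = (λ² - 1) (λ Λₙ₋₃ - ¼ Λₙ₋₄)`.
-/

namespace Matrix

variable {R : Type*}

def window (g : ℕ → ℕ → R) (a k : ℕ) : Matrix (Fin k) (Fin k) R :=
  of fun i j => g (a + i) (a + j)

theorem window_submatrix_succ (g : ℕ → ℕ → R) (a k : ℕ) :
    (window g a (k + 1)).submatrix Fin.succ Fin.succ = window g (a + 1) k := by
  ext i j
  simp only [window, submatrix_apply, of_apply, Fin.val_succ]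
  ring_nf

theorem det_window_add_two [CommRing R] {g : ℕ → ℕ → R}
    (hg : ∀ p q, p + 2 ≤ q ∨ q + 2 ≤ p → g p q = 0) (a k : ℕ) :
    (window g a (k + 2)).det = g a a * (window g (a + 1) (k + 1)).det
      - g a (a + 1) * g (a + 1) a * (window g (a + 2) k).det := by
  set M := window g a (k + 2)
  have minor_one_corner : (M.submatrix Fin.succ (Fin.succAbove 1)).submatrix Fin.succ Fin.succ
      = window g (a + 2) k := by
    rw [submatrix_submatrix, show Fin.succAbove 1 ∘ Fin.succ = Fin.succ ∘ Fin.succ from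
      funext Fin.one_succAbove_succ, ← submatrix_submatrix, window_submatrix_succ,
      window_submatrix_succ]
  -- the first column of this minor vanishes below its top entry `g (a + 1) a`
  have minor_one : (M.submatrix Fin.succ (Fin.succAbove 1)).det
      = g (a + 1) a * (window g (a + 2) k).det := by
    rw [det_succ_column_zero, Fin.sum_univ_succ, Finset.sum_eq_zero, Fin.succAbove_zero,
      minor_one_corner]
    · simp [M, window]
    · intro i _
      simp [M, window, hg (a + (i + 2)) a (.inr (by omega))]
  rw [det_succ_row_zero, Fin.sum_univ_succ, Fin.sum_univ_succ, Finset.sum_eq_zero]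
  · simp only [Fin.coe_ofNat_eq_mod, Nat.zero_mod, pow_zero, one_mul, Fin.succAbove_zero,
      window_submatrix_succ, Fin.succ_zero_eq_one, Nat.one_mod, pow_one, neg_mul, minor_one,
      add_zero, M]
    simp [window]
    ring
  · intro j _
    simp [M, window, hg a (a + (j + 2)) (.inl (by omega))]

end Matrix

open Matrix SimpleGraph

def pathDegree (n p : ℕ) : ℕ := if p = 0 ∨ p + 1 = n then 1 else 2

theorem pathDegree_eq_two {n p : ℕ} (h₀ : 0 < p) (h₁ : p + 1 < n) : pathDegree n p = 2 :=
  if_neg (by omega)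

theorem pathDegree_sub_one (n : ℕ) : pathDegree n (n - 1) = 1 :=
  if_pos (by omega)

theorem degree_pathGraph {n : ℕ} (hn : 2 ≤ n) (i : Fin n) :
    (pathGraph n).degree i = pathDegree n i := by
  rw [← card_neighborFinset_eq_degree, pathDegree]
  split_ifs with hend
  · rw [Finset.card_eq_one]
    refine ⟨⟨if (i : ℕ) = 0 then 1 else n - 2, by split_ifs <;> omega⟩, ?_⟩
    ext j
    simp only [mem_neighborFinset, pathGraph_adj, Finset.mem_singleton, Fin.ext_iff]
    split_ifs <;> omega
  · rw [Finset.card_eq_two]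
    refine ⟨⟨i - 1, by omega⟩, ⟨i + 1, by omega⟩, by simp [Fin.ext_iff], ?_⟩
    ext j
    simp only [mem_neighborFinset, pathGraph_adj, Finset.mem_insert, Finset.mem_singleton,
      Fin.ext_iff]
    omega

noncomputable def pathCharEntry (n p q : ℕ) : ℝ[X] :=
  if p = q then X
  else if p + 1 = q ∨ q + 1 = p then -C (1 / √(pathDegree n p * pathDegree n q))
  else 0

theorem charmatrix_randicMatrix_pathGraph (n : ℕ) :
    charmatrix (randicMatrix (pathGraph n)) = window (pathCharEntry n) 0 n := by
  ext i j
  simp only [window, of_apply, zero_add, pathCharEntry, ← Fin.ext_iff]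
  split_ifs with hij hadj
  · simp [hij, randicMatrix]
  · have hn : 2 ≤ n := by omega
    rw [charmatrix_apply_ne _ _ _ hij, randicMatrix, if_pos (pathGraph_adj.mpr hadj),
      degree_pathGraph hn, degree_pathGraph hn]
  · rw [charmatrix_apply_ne _ _ _ hij, randicMatrix, if_neg (mt pathGraph_adj.mp hadj)]
    simp

theorem pathCharEntry_eq_zero {n p q : ℕ} (h : p + 2 ≤ q ∨ q + 2 ≤ p) :
    pathCharEntry n p q = 0 := by
  rw [pathCharEntry, if_neg (by omega), if_neg (by omega)]

theorem pathCharEntry_self (n p : ℕ) : pathCharEntry n p p = X := if_pos rfl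

theorem pathCharEntry_mul_swap (n p : ℕ) :
    pathCharEntry n p (p + 1) * pathCharEntry n (p + 1) p
      = C (((pathDegree n p : ℝ) * pathDegree n (p + 1))⁻¹) := by
  simp only [pathCharEntry, if_neg (Nat.ne_add_one p), if_neg (Nat.add_one_ne_self p), true_or,
    or_true, if_true, neg_mul_neg, ← C_mul, mul_comm (pathDegree n (p + 1) : ℝ)]
  rw [← sq, div_pow, Real.sq_sqrt (by positivity), one_pow, one_div]

noncomputable def pathTail (n k : ℕ) : ℝ[X] := (window (pathCharEntry n) (n - k) k).det

theorem charpoly_randicMatrix_pathGraph (n : ℕ) :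
    (randicMatrix (pathGraph n)).charpoly = pathTail n n := by
  rw [charpoly, charmatrix_randicMatrix_pathGraph, pathTail, Nat.sub_self]

theorem pathTail_zero (n : ℕ) : pathTail n 0 = 1 := det_isEmpty

theorem pathTail_one (n : ℕ) : pathTail n 1 = X := by
  simp [pathTail, window, pathCharEntry_self]

theorem pathTail_add_two {n k : ℕ} (hk : k + 2 ≤ n) :
    pathTail n (k + 2) = X * pathTail n (k + 1)
      - C (((pathDegree n (n - (k + 2)) : ℝ) * pathDegree n (n - (k + 1)))⁻¹)
        * pathTail n k := by
  rw [pathTail, det_window_add_two (fun _ _ ↦ pathCharEntry_eq_zero), pathCharEntry_self,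
    pathCharEntry_mul_swap, pathTail, pathTail, show n - (k + 2) + 1 = n - (k + 1) by omega,
    show n - (k + 2) + 2 = n - k by omega]

theorem pathTail_add_two_eq_Lam {n k : ℕ} (hk : k + 3 ≤ n) :
    pathTail n (k + 2) = X * Lam (k + 1) - C (1 / 2) * Lam k := by
  induction k using Nat.twoStepInduction with
  | zero =>
    rw [pathTail_add_two (by omega), pathDegree_eq_two (by omega) (by omega), zero_add,
      pathDegree_sub_one, pathTail_one, pathTail_zero]
    norm_num [Lam]
  | one =>
    rw [pathTail_add_two (by omega), pathDegree_eq_two (by omega) (by omega),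
      pathDegree_eq_two (by omega) (by omega), pathTail_add_two (by omega),
      pathDegree_eq_two (by omega) (by omega), zero_add, pathDegree_sub_one, pathTail_one,
      pathTail_zero]
    norm_num [Lam]
    ring
  | more k ih₁ ih₂ =>
    rw [pathTail_add_two (by omega), pathDegree_eq_two (by omega) (by omega),
      pathDegree_eq_two (by omega) (by omega), ih₁ (by omega), ih₂ (by omega)]
    simp only [Lam]
    norm_num
    ring

theorem stmt11 (n : ℕ) (hn : 5 ≤ n) :
    (randicMatrix (SimpleGraph.pathGraph n)).charpoly =
      (X ^ 2 - 1) * (X * Lam (n - 3) - C (1 / 4) * Lam (n - 4)) := by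
  obtain ⟨m, rfl⟩ : ∃ m, n = m + 4 := ⟨n - 4, by omega⟩
  have expand_first_row : pathTail (m + 4) (m + 4)
      = X * pathTail (m + 4) (m + 3) - C (1 / 2) * pathTail (m + 4) (m + 2) := by
    rw [pathTail_add_two le_rfl, Nat.sub_self, show m + 2 + 2 - (m + 2 + 1) = 1 by omega,
      pathDegree_eq_two (p := 1) (by omega) (by omega)]
    norm_num [pathDegree]
  have half : (2 : ℝ[X]) * C (1 / 2) = 1 := by
    rw [← C_ofNat, ← C_mul]
    norm_num
  have quarter : C (1 / 4 : ℝ) = C (1 / 2) ^ 2 := by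
    rw [← C_pow]
    norm_num
  rw [charpoly_randicMatrix_pathGraph, expand_first_row, pathTail_add_two_eq_Lam (by omega),
    pathTail_add_two_eq_Lam (by omega), Lam.eq_3 m, show m + 4 - 3 = m + 1 from rfl,
    show m + 4 - 4 = m from rfl]
  linear_combination (-(X * Lam (m + 1))) * half - Lam m * quarter
end

section
/- For m, n ≥ 2 and any edge e of K_{m,n}, the Randić characteristic polynomial of K_{m,n} − e is λ^{m+n−4}(λ² − 1)(λ² − 1/(mn)). -/
open scoped Classical
open Polynomial

/-!
Let `a₀ ∈ Fin m`, `b₀ ∈ Fin n` be the ends of the deleted edge. The classes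
`{a₀}, Fin n ∖ {b₀}, Fin m ∖ {a₀}, {b₀}`, in this order, are the vertices of a path `P₄`, and two
vertices of `K_{m,n} − e` are adjacent iff their classes are; so the degrees `n-1, m, n, m-1` are
constant on classes. As `R = D^{-1/2} A D^{-1/2}`, `R` has the characteristic polynomial of `A D⁻¹`;
with `A = P A_{P₄} Pᵀ` for the class-indicator matrix `P`, the identity `X^k χ(MN) = X^l χ(NM)`
reduces `χ(R)` to `X^{m+n-4} χ(A_{P₄} W)` with `W` diagonal, `W_k = |class k| / degree on k`,
i.e. `1/(n-1), (n-1)/m, (m-1)/n, 1/(m-1)`. A weighted `P₄` has characteristic polynomial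
`X⁴ - (w₀w₁ + w₁w₂ + w₂w₃) X² + w₀w₁w₂w₃`, and here the coefficients are `1 + 1/(mn)` and `1/(mn)`.
-/

open Matrix

namespace Matrix

variable {R : Type*} [CommRing R] {V κ : Type*} [Fintype V] [Fintype κ] [DecidableEq V]
  [DecidableEq κ]

theorem charpoly_submatrix_mul_diagonal (A : Matrix κ κ R) (c : V → κ) (f : V → R)
    (hcard : Fintype.card κ ≤ Fintype.card V) :
    (A.submatrix c c * diagonal f).charpoly =
      X ^ (Fintype.card V - Fintype.card κ) *
        (A * diagonal fun k => ∑ i with c i = k, f i).charpoly := by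
  set P : Matrix V κ R := of fun i k => if c i = k then 1 else 0
  have hsub : A.submatrix c c * diagonal f = P * (A * (Pᵀ * diagonal f)) := by
    ext i j
    simp [P, mul_apply, diagonal, Finset.sum_ite_eq]
  have hfiber : Pᵀ * diagonal f * P = diagonal fun k => ∑ i with c i = k, f i := by
    ext k l
    simp only [P, mul_apply, transpose_apply, of_apply, diagonal_apply, mul_ite, mul_one, mul_zero,
      ite_mul, zero_mul, Finset.sum_ite_eq', Finset.mem_univ, if_true, Finset.sum_filter]
    split_ifs with hkl
    · subst hkl; exact Finset.sum_congr rfl fun i _ => by split_ifs <;> simp_all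
    · exact Finset.sum_eq_zero fun i _ => by split_ifs <;> simp_all
  rw [hsub, charpoly_mul_comm_of_le _ _ hcard, Matrix.mul_assoc, Matrix.mul_assoc,
    ← Matrix.mul_assoc _ _ P, hfiber]

end Matrix

theorem randicMatrix_eq_diagonal_mul_adjMatrix_mul_diagonal {V : Type*} [Fintype V]
    [DecidableEq V] (G : SimpleGraph V) :
    randicMatrix G = diagonal (fun i => (√(G.degree i : ℝ))⁻¹) * G.adjMatrix ℝ *
      diagonal (fun i => (√(G.degree i : ℝ))⁻¹) := by
  ext i j
  simp only [randicMatrix, mul_diagonal, diagonal_mul, SimpleGraph.adjMatrix_apply]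
  split_ifs <;> simp [Real.sqrt_mul, mul_comm]

theorem charpoly_randicMatrix {V : Type*} [Fintype V] [DecidableEq V] (G : SimpleGraph V) :
    (randicMatrix G).charpoly =
      (G.adjMatrix ℝ * diagonal fun i => (G.degree i : ℝ)⁻¹).charpoly := by
  rw [randicMatrix_eq_diagonal_mul_adjMatrix_mul_diagonal, Matrix.mul_assoc, charpoly_mul_comm,
    Matrix.mul_assoc, diagonal_mul_diagonal]
  simp_rw [← mul_inv, Real.mul_self_sqrt (Nat.cast_nonneg _)]

namespace SimpleGraph

open Finset

variable {V κ : Type*} [Fintype V] [Fintype κ] [DecidableEq κ] {G : SimpleGraph V}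
  {H : SimpleGraph κ} {c : V → κ}

theorem degree_eq_sum_card_fiber (hc : ∀ i j, G.Adj i j ↔ H.Adj (c i) (c j)) (i : V) :
    G.degree i = ∑ l with H.Adj (c i) l, #{j | c j = l} := by
  rw [← card_neighborFinset_eq_degree, neighborFinset_eq_filter]
  simp_rw [hc]
  rw [card_eq_sum_card_fiberwise (f := c) (t := {l | H.Adj (c i) l})
    fun j hj => by simpa using hj]
  refine sum_congr rfl fun l hl => congrArg _ ?_
  ext j
  simp only [mem_filter, mem_univ, true_and] at hl ⊢
  exact ⟨fun h => h.2, fun h => ⟨h ▸ hl, h⟩⟩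

theorem charpoly_randicMatrix_of_adj_iff [DecidableEq V]
    (hc : ∀ i j, G.Adj i j ↔ H.Adj (c i) (c j)) (hcard : Fintype.card κ ≤ Fintype.card V) :
    (randicMatrix G).charpoly = X ^ (Fintype.card V - Fintype.card κ) *
      (H.adjMatrix ℝ * diagonal fun k =>
        (#{i | c i = k} : ℝ) / (∑ l with H.Adj k l, #{j | c j = l} : ℕ)).charpoly := by
  have hadj : G.adjMatrix ℝ = (H.adjMatrix ℝ).submatrix c c := by
    ext i j
    simp [adjMatrix_apply, hc]
  rw [charpoly_randicMatrix, hadj, charpoly_submatrix_mul_diagonal _ _ _ hcard]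
  congr 4
  ext k
  rw [sum_congr rfl fun i hi => by rw [degree_eq_sum_card_fiber hc, (mem_filter.1 hi).2],
    sum_const, nsmul_eq_mul, div_eq_mul_inv]

theorem charpoly_pathGraph_four_adjMatrix_mul_diagonal {R : Type*} [CommRing R] (w : Fin 4 → R) :
    ((pathGraph 4).adjMatrix R * diagonal w).charpoly =
      X ^ 4 - C (w 0 * w 1 + w 1 * w 2 + w 2 * w 3) * X ^ 2 + C (w 0 * w 1 * (w 2 * w 3)) := by
  rw [charpoly, det_succ_row_zero]
  simp [Fin.sum_univ_succ, det_fin_three, charmatrix_apply, adjMatrix_apply, pathGraph_adj,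
    Fin.succAbove]
  ring

end SimpleGraph

section CompleteBipartiteDeleteEdge

open SimpleGraph Finset

variable {m n : ℕ}

def pathClass (a₀ : Fin m) (b₀ : Fin n) : Fin m ⊕ Fin n → Fin 4 :=
  Sum.elim (fun a => if a = a₀ then 0 else 2) (fun b => if b = b₀ then 3 else 1)

theorem deleteEdges_adj_iff_pathGraph_adj (a₀ : Fin m) (b₀ : Fin n) (i j : Fin m ⊕ Fin n) :
    ((completeBipartiteGraph (Fin m) (Fin n)).deleteEdges {s(.inl a₀, .inr b₀)}).Adj i j ↔
      (pathGraph 4).Adj (pathClass a₀ b₀ i) (pathClass a₀ b₀ j) := by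
  rcases i with a | b <;> rcases j with a' | b' <;>
    simp [pathClass, pathGraph_adj] <;> split_ifs <;> simp_all

theorem card_pathClass_fiber (a₀ : Fin m) (b₀ : Fin n) (k : Fin 4) :
    #{i | pathClass a₀ b₀ i = k} = ![1, n - 1, m - 1, 1] k := by
  rw [card_filter, Fintype.sum_sum_type]
  fin_cases k <;> simp [pathClass, ite_eq_iff, sum_ite, filter_ne']

theorem charpoly_randicMatrix_deleteEdges_completeBipartiteGraph (hm : 2 ≤ m) (hn : 2 ≤ n)
    (a₀ : Fin m) (b₀ : Fin n) :
    (randicMatrix ((completeBipartiteGraph (Fin m) (Fin n)).deleteEdges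
        {s(.inl a₀, .inr b₀)})).charpoly =
      X ^ (m + n - 4) * (X ^ 2 - 1) * (X ^ 2 - C (1 / ((m : ℝ) * n))) := by
  have hm' : (1 : ℝ) < m := by exact_mod_cast hm
  have hn' : (1 : ℝ) < n := by exact_mod_cast hn
  have hweights : (fun k => (#{i | pathClass a₀ b₀ i = k} : ℝ) /
      (∑ l with (pathGraph 4).Adj k l, #{j | pathClass a₀ b₀ j = l} : ℕ)) =
      ![1 / ((n : ℝ) - 1), ((n : ℝ) - 1) / m, ((m : ℝ) - 1) / n, 1 / ((m : ℝ) - 1)] := by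
    ext k
    fin_cases k <;>
      simp [card_pathClass_fiber, sum_filter, Fin.sum_univ_four, pathGraph_adj,
        Nat.cast_sub (by omega : 1 ≤ m), Nat.cast_sub (by omega : 1 ≤ n)]
  have hsum : 1 / ((n : ℝ) - 1) * (((n : ℝ) - 1) / m) +
      ((n : ℝ) - 1) / m * (((m : ℝ) - 1) / n) + ((m : ℝ) - 1) / n * (1 / ((m : ℝ) - 1)) =
      1 + 1 / ((m : ℝ) * n) := by
    field_simp [sub_ne_zero.2 hm'.ne', sub_ne_zero.2 hn'.ne']
    ring
  have hprod : 1 / ((n : ℝ) - 1) * (((n : ℝ) - 1) / m) *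
      (((m : ℝ) - 1) / n * (1 / ((m : ℝ) - 1))) = 1 / ((m : ℝ) * n) := by
    field_simp [sub_ne_zero.2 hm'.ne', sub_ne_zero.2 hn'.ne']
  rw [charpoly_randicMatrix_of_adj_iff (deleteEdges_adj_iff_pathGraph_adj a₀ b₀)
    (by simp; omega), hweights, charpoly_pathGraph_four_adjMatrix_mul_diagonal]
  simp only [Fintype.card_sum, Fintype.card_fin, Matrix.cons_val, hsum, hprod, map_add, map_one]
  ring

end CompleteBipartiteDeleteEdge

theorem stmt18 (m n : ℕ) (hm : 2 ≤ m) (hn : 2 ≤ n) (e : Sym2 (Fin m ⊕ Fin n))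
    (he : e ∈ (completeBipartiteGraph (Fin m) (Fin n)).edgeSet) :
    (randicMatrix ((completeBipartiteGraph (Fin m) (Fin n)).deleteEdges {e})).charpoly =
      X ^ (m + n - 4) * (X ^ 2 - 1) * (X ^ 2 - C (1 / ((m : ℝ) * n))) := by
  induction e using Sym2.ind with
  | _ x y =>
    rcases x with a₀ | b₀ <;> rcases y with a₁ | b₁
    · simp at he
    · exact charpoly_randicMatrix_deleteEdges_completeBipartiteGraph hm hn a₀ b₁
    · rw [Sym2.eq_swap]
      exact charpoly_randicMatrix_deleteEdges_completeBipartiteGraph hm hn a₁ b₀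
    · simp at he
end
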